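/- arXiv:2505.08018 — 2 statements merged into one kernel-verified Lean document; each statement's English description precedes it below -/
import Mathlib

section
/- Let 1 ≤ k ≤ n−1 and let S be a collection of k-dimensional subspaces of E = F_q^n such that dim(V ∩ W) ≤ k−2 for all distinct V, W ∈ S. Define ρ_S(V) = k−1 if V ∈ S and ρ_S(V) = min{dim V, k} otherwise. Then ρ_S is a q-rank function with integer values (so (L(E), ρ_S) is a q-matroid). -/
/-- A q-rank function: bounded by dimension, monotone and submodular. -/
def IsQRankFn {F E : Type*} [Field F] [AddCommGroup E] [Module F E]
    (ρ : Submodule F E → ℝ) : Prop :=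
  (∀ A : Submodule F E, 0 ≤ ρ A ∧ ρ A ≤ (Module.finrank F A : ℝ)) ∧
  (∀ A B : Submodule F E, A ≤ B → ρ A ≤ ρ B) ∧
  (∀ A B : Submodule F E, ρ (A ⊓ B) + ρ (A ⊔ B) ≤ ρ A + ρ B)

/-- The paving construction yields an integer-valued q-rank function, i.e. a q-matroid. -/
theorem stmt9 (F : Type*) [Field F] [Fintype F] (n k : ℕ)
    (hk1 : 1 ≤ k) (hkn : k ≤ n - 1)
    (S : Set (Submodule F (Fin n → F)))
    (hSdim : ∀ V ∈ S, Module.finrank F V = k)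
    (hSint : ∀ V ∈ S, ∀ W ∈ S, V ≠ W → Module.finrank F ↥(V ⊓ W) + 2 ≤ k)
    (ρS : Submodule F (Fin n → F) → ℝ)
    (hρ₁ : ∀ V ∈ S, ρS V = (k : ℝ) - 1)
    (hρ₂ : ∀ V ∉ S, ρS V = ((min (Module.finrank F V) k : ℕ) : ℝ)) :
    IsQRankFn ρS ∧ ∀ V : Submodule F (Fin n → F), ∃ m : ℤ, ρS V = m := by
  classical
  set d : Submodule F (Fin n → F) → ℤ := fun V => (Module.finrank F V : ℤ) with hd
  set g : Submodule F (Fin n → F) → ℤ :=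
    fun V => if V ∈ S then (k : ℤ) - 1 else min (d V) k with hg
  have hgS : ∀ V ∈ S, g V = (k : ℤ) - 1 := fun V h => by simp [hg, h]
  have hgN : ∀ V ∉ S, g V = min (d V) (k : ℤ) := fun V h => by simp [hg, h]
  have hρ : ∀ V, ρS V = (g V : ℝ) := by
    intro V
    by_cases h : V ∈ S
    · rw [hρ₁ V h, hgS V h]; push_cast; ring
    · rw [hρ₂ V h, hgN V h]; simp only [hd]; push_cast; ring
  have hk : (1 : ℤ) ≤ (k : ℤ) := by exact_mod_cast hk1
  have hmono : ∀ {A B : Submodule F (Fin n → F)}, A ≤ B → d A ≤ d B := by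
    intro A B h
    simp only [hd]
    exact_mod_cast Submodule.finrank_mono h
  have hmod : ∀ A B : Submodule F (Fin n → F),
      d (A ⊓ B) + d (A ⊔ B) = d A + d B := by
    intro A B
    have := Submodule.finrank_sup_add_finrank_inf_eq A B
    simp only [hd]
    push_cast
    omega
  have heq : ∀ {A B : Submodule F (Fin n → F)}, A ≤ B → d B ≤ d A → A = B := by
    intro A B h h2
    simp only [hd] at h2
    exact Submodule.eq_of_le_of_finrank_le h (by exact_mod_cast h2)
  have hdS : ∀ V ∈ S, d V = (k : ℤ) := by
    intro V hV; simp [hd, hSdim V hV]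
  have hd0 : ∀ V, 0 ≤ d V := fun V => Int.ofNat_nonneg _
  have hg0 : ∀ V, 0 ≤ g V := by
    intro V
    by_cases h : V ∈ S
    · rw [hgS V h]; omega
    · rw [hgN V h]; have := hd0 V; omega
  have hgd : ∀ V, g V ≤ d V := by
    intro V
    by_cases h : V ∈ S
    · rw [hgS V h, hdS V h]; omega
    · rw [hgN V h]; omega
  have hgk : ∀ V, g V ≤ (k : ℤ) := by
    intro V
    by_cases h : V ∈ S
    · rw [hgS V h]; omega
    · rw [hgN V h]; omega
  -- monotone
  have hgmono : ∀ A B : Submodule F (Fin n → F), A ≤ B → g A ≤ g B := by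
    intro A B hAB
    have hdAB := hmono hAB
    by_cases hA : A ∈ S <;> by_cases hB : B ∈ S
    · rw [hgS A hA, hgS B hB]
    · have hdA : d A = k := hdS A hA
      rw [hgS A hA, hgN B hB]; omega
    · have hdB : d B = k := hdS B hB
      have hne : d A ≠ (k : ℤ) := by
        intro hcontra
        exact hA (by rw [heq hAB (by omega)]; exact hB)
      rw [hgN A hA, hgS B hB]; omega
    · rw [hgN A hA, hgN B hB]; omega
  -- submodular
  have hgsub : ∀ A B : Submodule F (Fin n → F),
      g (A ⊓ B) + g (A ⊔ B) ≤ g A + g B := by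
    intro A B
    have hIA : A ⊓ B ≤ A := inf_le_left
    have hIB : A ⊓ B ≤ B := inf_le_right
    have hAU : A ≤ A ⊔ B := le_sup_left
    have hBU : B ≤ A ⊔ B := le_sup_right
    have hiA := hmono hIA
    have hiB := hmono hIB
    have hAu := hmono hAU
    have hBu := hmono hBU
    have hm := hmod A B
    by_cases hA : A ∈ S <;> by_cases hB : B ∈ S
    · -- both in S
      by_cases hAB : A = B
      · subst hAB; simp
      · have hint : (Module.finrank F ↥(A ⊓ B) : ℕ) + 2 ≤ k := hSint A hA B hB hAB
        have hint' : d (A ⊓ B) + 2 ≤ (k : ℤ) := by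
          simp only [hd]; exact_mod_cast hint
        have hdA := hdS A hA
        have hdB := hdS B hB
        have hI : A ⊓ B ∉ S := fun h => by have := hdS _ h; omega
        have hU : A ⊔ B ∉ S := fun h => by have := hdS _ h; omega
        rw [hgS A hA, hgS B hB, hgN _ hI, hgN _ hU]
        omega
    · -- A ∈ S, B ∉ S
      have hdA := hdS A hA
      by_cases hI : A ⊓ B ∈ S
      · have e1 : A ⊓ B = A := heq hIA (by rw [hdS _ hI, hdA])
        have hAB : A ≤ B := inf_eq_left.mp e1
        have e2 : A ⊔ B = B := sup_eq_right.mpr hAB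
        rw [e1, e2]
      · by_cases hU : A ⊔ B ∈ S
        · have e2 : A = A ⊔ B := heq hAU (by rw [hdS _ hU, hdA])
          have hBA : B ≤ A := sup_eq_left.mp e2.symm
          have e1 : A ⊓ B = B := inf_eq_right.mpr hBA
          rw [e1, ← e2]
          omega
        · have hik : d (A ⊓ B) ≠ (k : ℤ) := by
            intro h
            exact hI (by rw [heq hIA (by omega)]; exact hA)
          have huk : d (A ⊔ B) ≠ (k : ℤ) := by
            intro h
            exact hU (by rw [← heq hAU (by omega)]; exact hA)
          rw [hgS A hA, hgN B hB, hgN _ hI, hgN _ hU]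
          omega
    · -- B ∈ S, A ∉ S
      have hdB := hdS B hB
      by_cases hI : A ⊓ B ∈ S
      · have e1 : A ⊓ B = B := heq hIB (by rw [hdS _ hI, hdB])
        have hBA : B ≤ A := inf_eq_right.mp e1
        have e2 : A ⊔ B = A := sup_eq_left.mpr hBA
        rw [e1, e2]
        omega
      · by_cases hU : A ⊔ B ∈ S
        · have e2 : B = A ⊔ B := heq hBU (by rw [hdS _ hU, hdB])
          have hAB : A ≤ B := sup_eq_right.mp e2.symm
          have e1 : A ⊓ B = A := inf_eq_left.mpr hAB
          rw [e1, ← e2]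
        · have hik : d (A ⊓ B) ≠ (k : ℤ) := by
            intro h
            exact hI (by rw [heq hIB (by omega)]; exact hB)
          have huk : d (A ⊔ B) ≠ (k : ℤ) := by
            intro h
            exact hU (by rw [← heq hBU (by omega)]; exact hB)
          rw [hgN A hA, hgS B hB, hgN _ hI, hgN _ hU]
          omega
    · -- neither in S
      have h1 := hgd (A ⊓ B)
      have h2 := hgk (A ⊓ B)
      have h3 := hgd (A ⊔ B)
      have h4 := hgk (A ⊔ B)
      rw [hgN A hA, hgN B hB]
      omega
  refine ⟨⟨fun A => ⟨?_, ?_⟩, fun A B h => ?_, fun A B => ?_⟩, fun V => ⟨g V, hρ V⟩⟩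
  · rw [hρ]; exact_mod_cast hg0 A
  · rw [hρ]
    have := hgd A
    simp only [hd] at this
    exact_mod_cast this
  · rw [hρ, hρ]; exact_mod_cast hgmono A B h
  · rw [hρ, hρ, hρ, hρ]; exact_mod_cast hgsub A B
end

section
/- Let 1 < k₁ < k₂ < n and let ρ be any convex combination (with coefficient 0 < λ < 1) of the rank functions of the uniform q-matroids U_{k₁,n}(q) and U_{k₂,n}(q). Then the flats of (L(E),ρ) are exactly the subspaces of dimension < k₂ together with E, the cyclic spaces are exactly the subspaces of dimension > k₁ together with ⟨0⟩, and hence the cyclic flats are exactly ⟨0⟩, E, and all subspaces A with k₁ < dim(A) < k₂. -/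
/-- F is a flat of (L(E),ρ). -/
def IsFlat {F E : Type*} [Field F] [AddCommGroup E] [Module F E]
    (ρ : Submodule F E → ℝ) (Fl : Submodule F E) : Prop :=
  ∀ v : Submodule F E, Module.finrank F v = 1 → ¬ v ≤ Fl → ρ Fl < ρ (Fl ⊔ v)

/-- X is a cyclic space of (L(E),ρ). -/
def IsCyclicSpace {F E : Type*} [Field F] [AddCommGroup E] [Module F E]
    (ρ : Submodule F E → ℝ) (X : Submodule F E) : Prop :=
  ∀ H : Submodule F E, H ≤ X → Module.finrank F H + 1 = Module.finrank F X →
    ρ X = ρ H ∨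
    (0 < ρ X - ρ H ∧ ∃ a : Submodule F E, Module.finrank F a = 1 ∧ a ≤ X ∧ ¬ a ≤ H ∧
      ρ X - ρ H < ρ a)

lemma exists_hyp {F E : Type*} [Field F] [AddCommGroup E] [Module F E] [FiniteDimensional F E]
    (X : Submodule F E) (h : Module.finrank F X ≠ 0) :
    ∃ H : Submodule F E, H ≤ X ∧ Module.finrank F H + 1 = Module.finrank F X := by
  have hd : 0 < Module.finrank F X := Nat.pos_of_ne_zero h
  let b := Module.finBasis F X
  let f : X →ₗ[F] F := b.coord ⟨0, hd⟩
  have hsurj : Function.Surjective f := by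
    intro c
    refine ⟨c • b ⟨0, hd⟩, ?_⟩
    simp [f]
  have hrange : LinearMap.range f = ⊤ := LinearMap.range_eq_top.mpr hsurj
  have h1 := LinearMap.finrank_range_add_finrank_ker f
  rw [hrange] at h1
  have h2 : Module.finrank F (⊤ : Submodule F F) = 1 := by
    simp [Module.finrank_self]
  rw [h2] at h1
  refine ⟨(LinearMap.ker f).map X.subtype, Submodule.map_subtype_le _ _, ?_⟩
  have h3 : Module.finrank F ((LinearMap.ker f).map X.subtype) =
      Module.finrank F (LinearMap.ker f) :=
    (Submodule.equivMapOfInjective X.subtype X.injective_subtype _).symm.finrank_eq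
  omega

lemma finrank_sup_one {F E : Type*} [Field F] [AddCommGroup E] [Module F E]
    [FiniteDimensional F E] (X v : Submodule F E) (hv : Module.finrank F v = 1)
    (h : ¬ v ≤ X) : Module.finrank F (X ⊔ v : Submodule F E) = Module.finrank F X + 1 := by
  have h1 : X ⊓ v < v := lt_of_le_of_ne inf_le_right (fun he => h (he ▸ inf_le_left))
  have h2 : Module.finrank F (X ⊓ v : Submodule F E) = 0 := by
    have := Submodule.finrank_lt_finrank_of_lt h1
    omega
  have key := Submodule.finrank_sup_add_finrank_inf_eq X v
  omega

/-- Flats, cyclic spaces and cyclic flats of a convex combination of two uniform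
q-matroids U_{k₁,n}(q) and U_{k₂,n}(q). -/
theorem stmt17 (F : Type*) [Field F] [Fintype F] (n k₁ k₂ : ℕ)
    (hk₁ : 1 < k₁) (hk₁₂ : k₁ < k₂) (hk₂n : k₂ < n)
    (ρ₁ ρ₂ : Submodule F (Fin n → F) → ℝ)
    (hρ₁ : ∀ V, ρ₁ V = ((min k₁ (Module.finrank F V) : ℕ) : ℝ))
    (hρ₂ : ∀ V, ρ₂ V = ((min k₂ (Module.finrank F V) : ℕ) : ℝ))
    (l : ℝ) (hl0 : 0 < l) (hl1 : l < 1)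
    (ρ : Submodule F (Fin n → F) → ℝ)
    (hρ : ∀ X, ρ X = l * ρ₁ X + (1 - l) * ρ₂ X) :
    (∀ X : Submodule F (Fin n → F),
      IsFlat ρ X ↔ (Module.finrank F X < k₂ ∨ X = ⊤)) ∧
    (∀ X : Submodule F (Fin n → F),
      IsCyclicSpace ρ X ↔ (k₁ < Module.finrank F X ∨ X = ⊥)) ∧
    (∀ X : Submodule F (Fin n → F),
      (IsFlat ρ X ∧ IsCyclicSpace ρ X) ↔
        (X = ⊥ ∨ X = ⊤ ∨ (k₁ < Module.finrank F X ∧ Module.finrank F X < k₂))) := by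
  have hn : Module.finrank F (Fin n → F) = n := Module.finrank_fin_fun F
  have hρ' : ∀ X : Submodule F (Fin n → F), ρ X =
      l * ((min k₁ (Module.finrank F X) : ℕ) : ℝ)
      + (1 - l) * ((min k₂ (Module.finrank F X) : ℕ) : ℝ) := by
    intro X; rw [hρ, hρ₁, hρ₂]
  have hflat : ∀ X : Submodule F (Fin n → F),
      IsFlat ρ X ↔ (Module.finrank F X < k₂ ∨ X = ⊤) := by
    intro X
    constructor
    · intro hF
      by_contra hc
      push_neg at hc
      obtain ⟨h2, h3⟩ := hc
      have hlt : X < ⊤ := lt_of_le_of_ne le_top h3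
      obtain ⟨x, -, hx⟩ := SetLike.exists_of_lt hlt
      have hx0 : x ≠ 0 := fun h => hx (h ▸ X.zero_mem)
      have hv1 : Module.finrank F (Submodule.span F {x}) = 1 := finrank_span_singleton hx0
      have hvle : ¬ Submodule.span F {x} ≤ X := by
        rw [Submodule.span_singleton_le_iff_mem]; exact hx
      have hlt' := hF _ hv1 hvle
      have hsup := finrank_sup_one X _ hv1 hvle
      rw [hρ', hρ', hsup] at hlt'
      have e1 : min k₁ (Module.finrank F X) = k₁ := min_eq_left (by omega)
      have e2 : min k₂ (Module.finrank F X) = k₂ := min_eq_left h2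
      have e3 : min k₁ (Module.finrank F X + 1) = k₁ := min_eq_left (by omega)
      have e4 : min k₂ (Module.finrank F X + 1) = k₂ := min_eq_left (by omega)
      rw [e1, e2, e3, e4] at hlt'
      exact lt_irrefl _ hlt'
    · rintro (hd | rfl)
      · intro v hv1 hvle
        rw [hρ', hρ', finrank_sup_one X v hv1 hvle]
        set d := Module.finrank F X with hdd
        have e1 : min k₂ d = d := min_eq_right (le_of_lt hd)
        have e2 : min k₂ (d + 1) = d + 1 := min_eq_right hd
        rw [e1, e2]
        have ha : ((min k₁ d : ℕ) : ℝ) ≤ ((min k₁ (d + 1) : ℕ) : ℝ) := by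
          exact_mod_cast min_le_min le_rfl (Nat.le_succ d)
        have hb : ((d : ℕ) : ℝ) < ((d + 1 : ℕ) : ℝ) := by exact_mod_cast Nat.lt_succ_self d
        have t1 : l * ((min k₁ d : ℕ) : ℝ) ≤ l * ((min k₁ (d + 1) : ℕ) : ℝ) :=
          mul_le_mul_of_nonneg_left ha hl0.le
        have t2 : (1 - l) * ((d : ℕ) : ℝ) < (1 - l) * ((d + 1 : ℕ) : ℝ) :=
          mul_lt_mul_of_pos_left hb (sub_pos.mpr hl1)
        push_cast at t1 t2 ⊢
        clear hvle
        linarith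
      · intro v hv1 hvle; exact absurd le_top hvle
  have hcyc : ∀ X : Submodule F (Fin n → F),
      IsCyclicSpace ρ X ↔ (k₁ < Module.finrank F X ∨ X = ⊥) := by
    intro X
    constructor
    · intro hC
      by_contra hc
      push_neg at hc
      obtain ⟨h2, h3⟩ := hc
      have hd0 : Module.finrank F X ≠ 0 := fun h => h3 (Submodule.finrank_eq_zero.mp h)
      obtain ⟨H, hHle, hHrk⟩ := exists_hyp X hd0
      rcases hC H hHle hHrk with h | ⟨hpos, a, ha1, haX, haH, halt⟩
      · rw [hρ', hρ'] at h
        have e1 : min k₁ (Module.finrank F X) = Module.finrank F X := min_eq_right h2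
        have e2 : min k₂ (Module.finrank F X) = Module.finrank F X :=
          min_eq_right (by omega)
        have e3 : min k₁ (Module.finrank F H) = Module.finrank F H :=
          min_eq_right (by omega)
        have e4 : min k₂ (Module.finrank F H) = Module.finrank F H :=
          min_eq_right (by omega)
        rw [e1, e2, e3, e4] at h
        have : ((Module.finrank F X : ℕ) : ℝ) = ((Module.finrank F H : ℕ) : ℝ) := by
          linarith
        have : Module.finrank F X = Module.finrank F H := by exact_mod_cast this
        omega
      · simp only [hρ'] at halt
        have e1 : min k₁ (Module.finrank F X) = Module.finrank F X := min_eq_right h2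
        have e2 : min k₂ (Module.finrank F X) = Module.finrank F X :=
          min_eq_right (by omega)
        have e3 : min k₁ (Module.finrank F H) = Module.finrank F H :=
          min_eq_right (by omega)
        have e4 : min k₂ (Module.finrank F H) = Module.finrank F H :=
          min_eq_right (by omega)
        have e5 : min k₁ (Module.finrank F a) = 1 := by rw [ha1]; exact min_eq_right (by omega)
        have e6 : min k₂ (Module.finrank F a) = 1 := by rw [ha1]; exact min_eq_right (by omega)
        rw [e1, e2, e3, e4, e5, e6] at halt
        have hc' : ((Module.finrank F X : ℕ) : ℝ) = ((Module.finrank F H : ℕ) : ℝ) + 1 := by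
          exact_mod_cast congrArg (Nat.cast : ℕ → ℝ) hHrk.symm
        push_cast at halt hc'
        clear haH haX hHle
        linarith
    · rintro (hd | rfl)
      · intro H hHle hHrk
        by_cases hek : k₂ ≤ Module.finrank F H
        · left
          rw [hρ', hρ']
          have e1 : min k₁ (Module.finrank F X) = k₁ := min_eq_left (by omega)
          have e2 : min k₂ (Module.finrank F X) = k₂ := min_eq_left (by omega)
          have e3 : min k₁ (Module.finrank F H) = k₁ := min_eq_left (by omega)
          have e4 : min k₂ (Module.finrank F H) = k₂ := min_eq_left hek
          rw [e1, e2, e3, e4]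
        · right
          push_neg at hek
          have he1 : k₁ ≤ Module.finrank F H := by omega
          have hHlt : H < X := lt_of_le_of_ne hHle (by intro h; rw [h] at hHrk; omega)
          obtain ⟨x, hxX, hxH⟩ := SetLike.exists_of_lt hHlt
          have hx0 : x ≠ 0 := fun h => hxH (h ▸ H.zero_mem)
          refine ⟨?_, Submodule.span F {x}, finrank_span_singleton hx0,
            (Submodule.span_singleton_le_iff_mem _ _).mpr hxX, ?_, ?_⟩
          · rw [hρ', hρ']
            have e1 : min k₁ (Module.finrank F X) = k₁ := min_eq_left (by omega)
            have e2 : min k₂ (Module.finrank F X) = Module.finrank F X :=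
              min_eq_right (by omega)
            have e3 : min k₁ (Module.finrank F H) = k₁ := min_eq_left he1
            have e4 : min k₂ (Module.finrank F H) = Module.finrank F H :=
              min_eq_right (by omega)
            rw [e1, e2, e3, e4]
            have hc' : ((Module.finrank F X : ℕ) : ℝ) = ((Module.finrank F H : ℕ) : ℝ) + 1 := by
              exact_mod_cast congrArg (Nat.cast : ℕ → ℝ) hHrk.symm
            clear hHle hHlt hxX hxH
            nlinarith
          · rw [Submodule.span_singleton_le_iff_mem]; exact hxH
          · rw [hρ', hρ', hρ']
            have e1 : min k₁ (Module.finrank F X) = k₁ := min_eq_left (by omega)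
            have e2 : min k₂ (Module.finrank F X) = Module.finrank F X :=
              min_eq_right (by omega)
            have e3 : min k₁ (Module.finrank F H) = k₁ := min_eq_left he1
            have e4 : min k₂ (Module.finrank F H) = Module.finrank F H :=
              min_eq_right (by omega)
            have e5 : min k₁ (Module.finrank F (Submodule.span F {x})) = 1 := by
              rw [finrank_span_singleton hx0]; exact min_eq_right (by omega)
            have e6 : min k₂ (Module.finrank F (Submodule.span F {x})) = 1 := by
              rw [finrank_span_singleton hx0]; exact min_eq_right (by omega)
            rw [e1, e2, e3, e4, e5, e6]
            have hc' : ((Module.finrank F X : ℕ) : ℝ) = ((Module.finrank F H : ℕ) : ℝ) + 1 := by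
              exact_mod_cast congrArg (Nat.cast : ℕ → ℝ) hHrk.symm
            push_cast
            clear hHle hHlt hxX hxH
            nlinarith
      · intro H hHle hHrk
        rw [finrank_bot] at hHrk
        omega
  refine ⟨hflat, hcyc, ?_⟩
  intro X
  rw [hflat X, hcyc X]
  constructor
  · rintro ⟨hf, hc⟩
    rcases hc with hc | rfl
    · rcases hf with hf | rfl
      · exact Or.inr (Or.inr ⟨hc, hf⟩)
      · exact Or.inr (Or.inl rfl)
    · exact Or.inl rfl
  · rintro (rfl | rfl | ⟨h1, h2⟩)
    · exact ⟨Or.inl (by rw [finrank_bot]; omega), Or.inr rfl⟩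
    · exact ⟨Or.inr rfl, Or.inl (by rw [finrank_top, hn]; omega)⟩
    · exact ⟨Or.inl h2, Or.inl h1⟩
end
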